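/- arXiv:2210.04712 — 2 statements merged into one kernel-verified Lean document; each statement's English description precedes it below -/
import Mathlib

section
/- Let F be a graph without isolated vertices whose connected components are F_1, …, F_p, and let k ≥ 1. Suppose there exists some graph containing exactly k copies of F. Then for every n ≥ 2k·|V(F)| there exists a graph G on n vertices with exactly k copies of F (N(G,F) = k) and with at least (1 − 2k|V(F)|/n)·ex(n,{F_1,…,F_p}) edges; consequently exa_k(n,F) ≥ (1 − 2k|V(F)|/n)·ex(n,{F_1,…,F_p}). -/
open SimpleGraph

/-- The number of copies of `F` in `G`, i.e. the number of subgraphs of `G`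
isomorphic to `F`. -/
noncomputable def copyCount {V W : Type*} (G : SimpleGraph V) (F : SimpleGraph W) : ℕ :=
  Set.ncard {H : G.Subgraph | Nonempty (H.coe ≃g F)}

/-- The number of edges of a graph. -/
noncomputable def edgeCount {V : Type*} (G : SimpleGraph V) : ℕ := G.edgeSet.ncard

/-- `ex(n, {F₁, …, F_p})` where `F₁, …, F_p` are the connected components of `F`:
the maximum number of edges of a graph on `n` vertices containing no copy of any
connected component of `F`. -/
noncomputable def exComponents (n : ℕ) {U : Type*} (F : SimpleGraph U) : ℕ :=
  sSup {m | ∃ G : SimpleGraph (Fin n),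
    (∀ c : F.ConnectedComponent, _root_.copyCount G (F.induce c.supp) = 0) ∧ edgeCount G = m}

section Helpers

variable {V V' W : Type*} {G : SimpleGraph V} {G' : SimpleGraph V'} {F : SimpleGraph W}

instance mySubgraphFinite [Finite V] : Finite (G.Subgraph) := by
  have : Function.Injective (fun H : G.Subgraph => (H.verts, H.Adj)) := by
    intro H K h
    simp only [Prod.mk.injEq] at h
    exact SimpleGraph.Subgraph.ext h.1 h.2
  exact Finite.of_injective _ this

lemma relmap_iff {f : V → V'} (hf : Function.Injective f) (H : G.Subgraph) (a b : V) :
    Relation.Map H.Adj f f (f a) (f b) ↔ H.Adj a b := by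
  constructor
  · rintro ⟨a', b', h, ha, hb⟩
    rwa [hf ha, hf hb] at h
  · exact fun h => ⟨a, b, h, rfl, rfl⟩

/-- coe of mapped subgraph is iso to coe. -/
noncomputable def mapCoeIso (f : G ↪g G') (H : G.Subgraph) :
    H.coe ≃g (H.map f.toHom).coe := by
  refine ⟨(Equiv.Set.image f H.verts f.injective), ?_⟩
  rintro ⟨a, ha⟩ ⟨b, hb⟩
  simp only [Equiv.Set.image, Equiv.Set.imageOfInjOn, Subgraph.coe_adj, Subgraph.map_adj]
  exact relmap_iff f.injective H a b

lemma comap_map_eq (f : G ↪g G') (H : G.Subgraph) :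
    (H.map f.toHom).comap f.toHom = H := by
  ext x y
  · simp [Set.preimage_image_eq _ f.injective]
  · simp only [Subgraph.comap_adj, Subgraph.map_adj]
    rw [show (⇑f.toHom : V → V') = ⇑f from rfl, relmap_iff f.injective]
    exact ⟨fun h => h.2, fun h => ⟨H.adj_sub h, h⟩⟩

lemma map_comap_eq (f : G ↪g G') (K : G'.Subgraph) (hK : K.verts ⊆ Set.range f) :
    (K.comap f.toHom).map f.toHom = K := by
  ext x y
  · simp [Set.image_preimage_eq_of_subset hK]
  · simp only [Subgraph.map_adj, Subgraph.comap_adj, Relation.Map]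
    constructor
    · rintro ⟨a, b, ⟨-, h⟩, rfl, rfl⟩; exact h
    · intro h
      obtain ⟨a, rfl⟩ := hK (K.edge_vert h)
      obtain ⟨b, rfl⟩ := hK (K.edge_vert h.symm)
      exact ⟨a, b, ⟨f.map_rel_iff.mp (K.adj_sub h), h⟩, rfl, rfl⟩

lemma map_inj (f : G ↪g G') : Function.Injective (Subgraph.map f.toHom : G.Subgraph → G'.Subgraph) :=
  Function.LeftInverse.injective (comap_map_eq f)

lemma copyCount_eq_of_embedding (f : G ↪g G') (F : SimpleGraph W)
    (hcov : ∀ K : G'.Subgraph, Nonempty (K.coe ≃g F) → K.verts ⊆ Set.range f) :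
    _root_.copyCount G' F = _root_.copyCount G F := by
  have himg : {K : G'.Subgraph | Nonempty (K.coe ≃g F)} =
      (Subgraph.map f.toHom) '' {H : G.Subgraph | Nonempty (H.coe ≃g F)} := by
    ext K
    constructor
    · rintro ⟨ψ⟩
      refine ⟨K.comap f.toHom, ⟨?_⟩, map_comap_eq f K (hcov K ⟨ψ⟩)⟩
      have e1 := mapCoeIso f (K.comap f.toHom)
      rw [map_comap_eq f K (hcov K ⟨ψ⟩)] at e1
      exact ψ.comp e1
    · rintro ⟨H, ⟨ψ⟩, rfl⟩
      exact ⟨ψ.comp (mapCoeIso f H).symm⟩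
  rw [_root_.copyCount, _root_.copyCount, himg, Set.ncard_image_of_injective _ (map_inj f)]

lemma copyCount_eq_of_iso (e : G ≃g G') (F : SimpleGraph W) :
    _root_.copyCount G F = _root_.copyCount G' F := by
  rw [copyCount_eq_of_embedding e.toEmbedding F]
  intro K _ x _
  exact ⟨e.symm x, e.apply_symm_apply x⟩

lemma edgeCount_eq_of_iso (e : G ≃g G') : edgeCount G = edgeCount G' := by
  rw [edgeCount, edgeCount, ← Nat.card_coe_set_eq, ← Nat.card_coe_set_eq]
  exact Nat.card_congr e.mapEdgeSet

lemma edgeCount_le_of_embedding [Finite V'] (f : G ↪g G') : edgeCount G ≤ edgeCount G' := by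
  rw [edgeCount, edgeCount, ← Nat.card_coe_set_eq, ← Nat.card_coe_set_eq]
  exact Nat.card_le_card_of_injective f.mapEdgeSet f.mapEdgeSet.injective

/-- if `F'` has an edge then the empty graph has no copies of it -/
lemma copyCount_bot_eq_zero {a b : W} (hab : F.Adj a b) :
    _root_.copyCount (⊥ : SimpleGraph V) F = 0 := by
  have : {K : (⊥ : SimpleGraph V).Subgraph | Nonempty (K.coe ≃g F)} = ∅ := by
    ext K
    simp only [Set.mem_setOf_eq, Set.mem_empty_iff_false, iff_false]
    rintro ⟨ψ⟩
    have := ψ.symm.map_rel_iff.mpr hab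
    exact K.adj_sub this
  rw [_root_.copyCount, this, Set.ncard_empty]

lemma exComponents_exists (n : ℕ) {U : Type*} (F : SimpleGraph U)
    (hne : ∀ c : F.ConnectedComponent, ∃ a b, (F.induce c.supp).Adj a b) :
    ∃ G : SimpleGraph (Fin n),
      (∀ c : F.ConnectedComponent, _root_.copyCount G (F.induce c.supp) = 0) ∧
      edgeCount G = exComponents n F := by
  have hmem : exComponents n F ∈ {m | ∃ G : SimpleGraph (Fin n),
      (∀ c : F.ConnectedComponent, _root_.copyCount G (F.induce c.supp) = 0) ∧ edgeCount G = m} := by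
    apply Nat.sSup_mem
    · refine ⟨edgeCount (⊥ : SimpleGraph (Fin n)), ⊥, fun c => ?_, rfl⟩
      obtain ⟨a, b, hab⟩ := hne c
      exact copyCount_bot_eq_zero hab
    · refine ⟨(Set.univ : Set (Sym2 (Fin n))).ncard, ?_⟩
      rintro m ⟨G, -, rfl⟩
      exact Set.ncard_le_ncard (Set.subset_univ _) (Set.finite_univ)
  obtain ⟨G, h1, h2⟩ := hmem
  exact ⟨G, h1, h2⟩

/-- every connected component of a graph without isolated vertices has an edge -/
lemma component_has_edge (F : SimpleGraph W) (hIso : ∀ u : W, ∃ w : W, F.Adj u w)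
    (c : F.ConnectedComponent) : ∃ a b, (F.induce c.supp).Adj a b := by
  obtain ⟨v, rfl⟩ := c.exists_rep
  obtain ⟨w, hw⟩ := hIso v
  have hv : v ∈ (F.connectedComponentMk v).supp := rfl
  have hwm : w ∈ (F.connectedComponentMk v).supp := by
    rw [ConnectedComponent.mem_supp_iff]
    exact (ConnectedComponent.sound hw.symm.reachable)
  exact ⟨⟨v, hv⟩, ⟨w, hwm⟩, hw⟩

section Sum
variable {V₁ V₂ : Type*} {G₁ : SimpleGraph V₁} {G₂ : SimpleGraph V₂}

lemma side_eq_of_reachable {K : (G₁ ⊕g G₂).Subgraph} {a b : ↥K.verts}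
    (h : K.coe.Reachable a b) : (a : V₁ ⊕ V₂).isLeft = (b : V₁ ⊕ V₂).isLeft := by
  obtain ⟨wlk⟩ := h
  induction wlk with
  | nil => rfl
  | @cons x y z hadj p ih =>
    refine Eq.trans ?_ ih
    have hxy : (G₁ ⊕g G₂).Adj (x : V₁ ⊕ V₂) (y : V₁ ⊕ V₂) := K.adj_sub hadj
    obtain ⟨x, hx⟩ := x; obtain ⟨y, hy⟩ := y
    cases x <;> cases y <;> simp_all

lemma copies_in_left [Finite V₂] {W : Type*} {F : SimpleGraph W}
    (hfree : ∀ c : F.ConnectedComponent, _root_.copyCount G₂ (F.induce c.supp) = 0)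
    (K : (G₁ ⊕g G₂).Subgraph) (hK : Nonempty (K.coe ≃g F)) :
    K.verts ⊆ Set.range Sum.inl := by
  obtain ⟨ψ⟩ := hK
  intro x hx
  by_contra hxl
  obtain ⟨y₀, rfl⟩ : ∃ y, x = Sum.inr y := by
    cases x with
    | inl a => exact absurd ⟨a, rfl⟩ hxl
    | inr b => exact ⟨b, rfl⟩
  set u : W := ψ ⟨Sum.inr y₀, hx⟩ with hu
  set c : F.ConnectedComponent := F.connectedComponentMk u with hc
  -- the vertex set of the component copy inside G₂
  set S : Set V₂ := {z | ∃ h : Sum.inr z ∈ K.verts,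
      F.connectedComponentMk (ψ ⟨Sum.inr z, h⟩) = c} with hS
  have hSind : ∀ (z : V₂) (h h' : Sum.inr z ∈ K.verts),
      ψ ⟨Sum.inr z, h⟩ = ψ ⟨Sum.inr z, h'⟩ := fun z h h' => rfl
  have hmemS : ∀ {z z'} (h : Sum.inr z ∈ K.verts), z' ∈ S → K.Adj (Sum.inr z') (Sum.inr z) →
      z ∈ S := by
    rintro z z' h ⟨h', hcz'⟩ hadj
    refine ⟨h, ?_⟩
    have : F.Adj (ψ ⟨Sum.inr z', h'⟩) (ψ ⟨Sum.inr z, h⟩) := ψ.map_rel_iff.mpr (by exact hadj)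
    rw [← hcz']
    exact (ConnectedComponent.connectedComponentMk_eq_of_adj this.symm)
  set K₂ : G₂.Subgraph :=
    { verts := S
      Adj := fun z z' => z ∈ S ∧ z' ∈ S ∧ K.Adj (Sum.inr z) (Sum.inr z')
      adj_sub := by
        rintro z z' ⟨-, -, h⟩
        have := K.adj_sub h
        simpa using this
      edge_vert := fun h => h.1
      symm := ⟨by rintro z z' ⟨h1, h2, h3⟩; exact ⟨h2, h1, h3.symm⟩⟩ } with hK₂
  -- K₂.coe ≃g F.induce c.supp
  have hto : ∀ z : ↥K₂.verts, ∃ hz : Sum.inr z.1 ∈ K.verts,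
      ψ ⟨Sum.inr z.1, hz⟩ ∈ c.supp := by
    rintro ⟨z, hz, hcz⟩
    exact ⟨hz, by rwa [ConnectedComponent.mem_supp_iff]⟩
  classical
  set tf : ↥K₂.verts → ↥c.supp := fun z => ⟨ψ ⟨Sum.inr z.1, (hto z).choose⟩, (hto z).choose_spec⟩
    with htf
  have hbij : Function.Bijective tf := by
    constructor
    · rintro ⟨z, hz⟩ ⟨z', hz'⟩ h
      have := congrArg Subtype.val h
      simp only [tf] at this
      have h2 : (⟨Sum.inr z, (hto ⟨z, hz⟩).choose⟩ : ↥K.verts)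
          = ⟨Sum.inr z', (hto ⟨z', hz'⟩).choose⟩ := ψ.injective this
      have := congrArg Subtype.val h2
      simp only [Sum.inr.injEq] at this
      exact Subtype.ext this
    · rintro ⟨v, hv⟩
      rw [ConnectedComponent.mem_supp_iff] at hv
      set a : ↥K.verts := ψ.symm v with ha
      have hreach : K.coe.Reachable ⟨Sum.inr y₀, hx⟩ a := by
        have hr : F.Reachable u v :=
          ConnectedComponent.exact (hv.trans hc).symm
        have hmap := hr.map (ψ.symm.toHom)
        have h2 : ψ.symm u = (⟨Sum.inr y₀, hx⟩ : ↥K.verts) := by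
          rw [hu]; exact ψ.symm_apply_apply _
        have hmap' : K.coe.Reachable (ψ.symm u) (ψ.symm v) := hmap
        rw [h2] at hmap'
        exact hmap'
      have hside := side_eq_of_reachable hreach
      obtain ⟨z, hz⟩ : ∃ z, (a : V₁ ⊕ V₂) = Sum.inr z := by
        cases haa : (a : V₁ ⊕ V₂) with
        | inl w => rw [haa] at hside; simp at hside
        | inr w => exact ⟨w, rfl⟩
      have hzK : Sum.inr z ∈ K.verts := hz ▸ a.2
      have hψa : ψ ⟨Sum.inr z, hzK⟩ = v := by
        have : (⟨Sum.inr z, hzK⟩ : ↥K.verts) = a := Subtype.ext hz.symm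
        rw [this, ha, ψ.apply_symm_apply]
      have hzS : z ∈ S := ⟨hzK, by rw [hψa]; exact hv⟩
      refine ⟨⟨z, hzS⟩, Subtype.ext ?_⟩
      simp only [tf]
      rw [hSind z _ hzK, hψa]
  set eqv : ↥K₂.verts ≃ ↥c.supp := Equiv.ofBijective tf hbij with heqv
  have hiso : Nonempty (K₂.coe ≃g F.induce c.supp) := by
    refine ⟨⟨eqv, ?_⟩⟩
    rintro ⟨z, hz⟩ ⟨z', hz'⟩
    show (F.induce c.supp).Adj (tf _) (tf _) ↔ _
    simp only [tf, comap_adj, Function.Embedding.coe_subtype, Subgraph.coe_adj]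
    rw [ψ.map_rel_iff]
    show K.coe.Adj ⟨Sum.inr z, _⟩ ⟨Sum.inr z', _⟩ ↔ K₂.Adj z z'
    simp only [Subgraph.coe_adj, hK₂]
    exact ⟨fun h => ⟨hz, hz', h⟩, fun h => h.2.2⟩
  have h0 := hfree c
  rw [_root_.copyCount, Set.ncard_eq_zero (Set.toFinite _)] at h0
  have : K₂ ∈ {H : G₂.Subgraph | Nonempty (H.coe ≃g F.induce c.supp)} := hiso
  rw [h0] at this
  exact this

end Sum

lemma copyCount_eq_zero_iff [Finite V] :
    _root_.copyCount G F = 0 ↔ ∀ H : G.Subgraph, ¬ Nonempty (H.coe ≃g F) := by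
  rw [_root_.copyCount, Set.ncard_eq_zero (Set.toFinite _), Set.eq_empty_iff_forall_notMem]
  rfl

lemma copyCount_zero_of_embedding [Finite V'] (f : G ↪g G')
    (h : _root_.copyCount G' F = 0) : _root_.copyCount G F = 0 := by
  have hf : Finite V := Finite.of_injective f f.injective
  rw [copyCount_eq_zero_iff] at h ⊢
  intro H ⟨ψ⟩
  exact h (H.map f.toHom) ⟨ψ.comp (mapCoeIso f H).symm⟩

lemma copyCount_sum_left {V₁ V₂ : Type*} [Finite V₂] {G₁ : SimpleGraph V₁} {G₂ : SimpleGraph V₂}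
    (hfree : ∀ c : F.ConnectedComponent, _root_.copyCount G₂ (F.induce c.supp) = 0) :
    _root_.copyCount (G₁ ⊕g G₂) F = _root_.copyCount G₁ F :=
  copyCount_eq_of_embedding Embedding.sumInl F
    (fun K hK => copies_in_left hfree K hK)

/-- each copy of `F` has `|V(F)|` vertices -/
lemma verts_ncard_of_copy [Fintype W] {K : G.Subgraph} (ψ : K.coe ≃g F) :
    K.verts.ncard = Fintype.card W := by
  rw [← Nat.card_coe_set_eq, Nat.card_congr ψ.toEquiv, Nat.card_eq_fintype_card]

/-- with `W` empty, every graph contains exactly one copy of `F` -/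
lemma copyCount_of_isEmpty [IsEmpty W] (G : SimpleGraph V) (F : SimpleGraph W) :
    _root_.copyCount G F = 1 := by
  have : {H : G.Subgraph | Nonempty (H.coe ≃g F)} = {⊥} := by
    ext K
    simp only [Set.mem_setOf_eq, Set.mem_singleton_iff]
    constructor
    · rintro ⟨ψ⟩
      have hem : IsEmpty ↥K.verts := ψ.toEquiv.isEmpty
      have hv : K.verts = ∅ := by
        rw [Set.eq_empty_iff_forall_notMem]
        exact fun x hx => hem.false ⟨x, hx⟩
      ext x y
      · simp [hv, Subgraph.verts_bot]
      · rw [show ((⊥ : G.Subgraph).Adj x y) = False from eq_false Subgraph.not_bot_adj,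
          iff_false]
        intro h
        rw [Set.eq_empty_iff_forall_notMem] at hv
        exact hv x (K.edge_vert h)
    · rintro rfl
      have h1 : IsEmpty ↥((⊥ : G.Subgraph).verts) := by
        constructor; rintro ⟨x, hx⟩; exact hx
      exact ⟨⟨Equiv.equivOfIsEmpty _ _, fun {a b} => isEmptyElim a⟩⟩
  rw [_root_.copyCount, this, Set.ncard_singleton]

section Degree
variable {n : ℕ}

lemma exists_min_degree_set (G : SimpleGraph (Fin n)) [DecidableRel G.Adj] (t : ℕ) (ht : t ≤ n) :
    ∃ S : Finset (Fin n), S.card = t ∧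
      n * ∑ v ∈ S, G.degree v ≤ t * ∑ v, G.degree v := by
  obtain ⟨S₀, hS₀sub, hS₀⟩ := Finset.exists_subset_card_eq (s := (Finset.univ : Finset (Fin n))) (n := t)
    (by simpa using ht)
  obtain ⟨S, hSmem, hmin⟩ := Finset.exists_min_image (Finset.powersetCard t Finset.univ)
    (fun S => ∑ v ∈ S, G.degree v) ⟨S₀, Finset.mem_powersetCard.mpr ⟨hS₀sub, hS₀⟩⟩
  rw [Finset.mem_powersetCard] at hSmem
  have hcard : S.card = t := hSmem.2
  refine ⟨S, hcard, ?_⟩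
  have key : ∀ v ∈ S, ∀ w, w ∉ S → G.degree v ≤ G.degree w := by
    intro v hv w hw
    have ht1 : 1 ≤ t := hcard ▸ Finset.card_pos.mpr ⟨v, hv⟩
    have hins : w ∉ S.erase v := fun h => hw (Finset.mem_of_mem_erase h)
    have hcard' : (insert w (S.erase v)).card = t := by
      rw [Finset.card_insert_of_notMem hins, Finset.card_erase_of_mem hv, hcard]
      omega
    have hle := hmin _ (Finset.mem_powersetCard.mpr ⟨Finset.subset_univ _, hcard'⟩)
    rw [Finset.sum_insert hins, ← Finset.add_sum_erase S _ hv] at hle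
    exact le_of_add_le_add_right hle
  set A := ∑ v ∈ S, G.degree v with hA
  set B := ∑ v ∈ Sᶜ, G.degree v with hB
  have hccard : Sᶜ.card = n - t := by
    rw [Finset.card_compl, hcard, Fintype.card_fin]
  have h1 : (n - t) * A ≤ t * B := by
    have hin : ∀ w ∈ Sᶜ, A ≤ t * G.degree w := by
      intro w hw
      rw [Finset.mem_compl] at hw
      calc A = ∑ v ∈ S, G.degree v := rfl
      _ ≤ ∑ _v ∈ S, G.degree w := Finset.sum_le_sum (fun v hv => key v hv w hw)
      _ = t * G.degree w := by rw [Finset.sum_const, smul_eq_mul, hcard]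
    calc (n - t) * A = ∑ _w ∈ Sᶜ, A := by rw [Finset.sum_const, smul_eq_mul, hccard]
    _ ≤ ∑ w ∈ Sᶜ, t * G.degree w := Finset.sum_le_sum hin
    _ = t * B := by rw [← Finset.mul_sum]
  have h2 : A + B = ∑ v, G.degree v := Finset.sum_add_sum_compl S _
  have h3 : n * A = (n - t) * A + t * A := by rw [← Nat.add_mul, Nat.sub_add_cancel ht]
  have h4 : t * B + t * A = t * ∑ v, G.degree v := by rw [← h2]; ring
  rw [h3, ← h4]
  exact Nat.add_le_add_right h1 _

lemma edge_loss (G : SimpleGraph (Fin n)) [DecidableRel G.Adj] (S : Finset (Fin n)) :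
    edgeCount G ≤ edgeCount (G.induce (↑(Sᶜ) : Set (Fin n))) + ∑ v ∈ S, G.degree v := by
  classical
  have hEC : edgeCount G = G.edgeFinset.card := by
    rw [edgeCount, Set.ncard_eq_toFinset_card']; simp [edgeFinset]
  set Ein := G.edgeFinset.filter (fun e => ∀ v ∈ S, v ∉ e) with hEin
  have hsub : G.edgeFinset ⊆ Ein ∪ S.biUnion (fun v => G.incidenceFinset v) := by
    intro e he
    by_cases h : ∀ v ∈ S, v ∉ e
    · exact Finset.mem_union_left _ (Finset.mem_filter.mpr ⟨he, h⟩)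
    · push_neg at h
      obtain ⟨v, hv, hve⟩ := h
      refine Finset.mem_union_right _ (Finset.mem_biUnion.mpr ⟨v, hv, ?_⟩)
      rw [mem_incidenceFinset]
      exact ⟨mem_edgeFinset.mp he, hve⟩
  have hcard1 : G.edgeFinset.card ≤ Ein.card + ∑ v ∈ S, G.degree v := by
    calc G.edgeFinset.card ≤ (Ein ∪ S.biUnion fun v => G.incidenceFinset v).card :=
        Finset.card_le_card hsub
    _ ≤ Ein.card + (S.biUnion fun v => G.incidenceFinset v).card := Finset.card_union_le _ _
    _ ≤ Ein.card + ∑ v ∈ S, (G.incidenceFinset v).card :=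
        Nat.add_le_add_left Finset.card_biUnion_le _
    _ = Ein.card + ∑ v ∈ S, G.degree v := by
        simp_rw [G.card_incidenceFinset_eq_degree]
  have hcard2 : Ein.card ≤ edgeCount (G.induce (↑(Sᶜ) : Set (Fin n))) := by
    have himg : (↑Ein : Set (Sym2 (Fin n))) ⊆
        Sym2.map (Subtype.val : (↑(Sᶜ) : Set (Fin n)) → Fin n) ''
          (G.induce (↑(Sᶜ) : Set (Fin n))).edgeSet := by
      intro e he
      rw [Finset.mem_coe, hEin, Finset.mem_filter, mem_edgeFinset] at he
      obtain ⟨he1, he2⟩ := he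
      induction e with
      | h a b =>
        have ha : a ∈ (↑(Sᶜ) : Set (Fin n)) := by
          simp only [Finset.coe_compl, Set.mem_compl_iff, Finset.mem_coe]
          exact fun h => he2 a h (Sym2.mem_mk_left a b)
        have hb : b ∈ (↑(Sᶜ) : Set (Fin n)) := by
          simp only [Finset.coe_compl, Set.mem_compl_iff, Finset.mem_coe]
          exact fun h => he2 b h (Sym2.mem_mk_right a b)
        refine ⟨s(⟨a, ha⟩, ⟨b, hb⟩), ?_, rfl⟩
        rw [SimpleGraph.mem_edgeSet]
        simpa using he1
    calc Ein.card = (↑Ein : Set (Sym2 (Fin n))).ncard := (Set.ncard_coe_finset _).symm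
    _ ≤ (Sym2.map (Subtype.val : (↑(Sᶜ) : Set (Fin n)) → Fin n) ''
          (G.induce (↑(Sᶜ) : Set (Fin n))).edgeSet).ncard :=
        Set.ncard_le_ncard himg (Set.toFinite _)
    _ = (G.induce (↑(Sᶜ) : Set (Fin n))).edgeSet.ncard :=
        Set.ncard_image_of_injective _ (Sym2.map.injective Subtype.val_injective)
    _ = edgeCount (G.induce (↑(Sᶜ) : Set (Fin n))) := rfl
  rw [hEC]
  exact le_trans hcard1 (Nat.add_le_add_right hcard2 _)

end Degree


end Helpers

/-- let `F` be a graph without isolated vertices, with connected components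
`F₁, …, F_p`, and `k ≥ 1`. If some graph contains exactly `k` copies of `F`, then for
every `n ≥ 2k·|V(F)|` there is a graph on `n` vertices with exactly `k` copies of `F`
and at least `(1 − 2k|V(F)|/n)·ex(n, {F₁, …, F_p})` edges. -/
theorem stmt4 {U : Type*} [Fintype U] (F : SimpleGraph U)
    (hIso : ∀ u : U, ∃ w : U, F.Adj u w)
    (k : ℕ) (hk : 1 ≤ k)
    (hex : ∃ (m : ℕ) (H : SimpleGraph (Fin m)), _root_.copyCount H F = k)
    (n : ℕ) (hn : 2 * k * Fintype.card U ≤ n) :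
    ∃ G : SimpleGraph (Fin n), _root_.copyCount G F = k ∧
      (1 - 2 * k * (Fintype.card U) / (n : ℝ)) * exComponents n F ≤ edgeCount G := by
  classical
  obtain ⟨G0, hfree0, hE0⟩ := exComponents_exists n F (component_has_edge F hIso)
  by_cases hU : IsEmpty U
  · -- degenerate case : `F` is the empty graph
    obtain ⟨m, H, hH⟩ := hex
    have hk1 : k = 1 := by rw [← hH, _root_.copyCount_of_isEmpty]
    refine ⟨G0, by rw [_root_.copyCount_of_isEmpty, hk1], ?_⟩
    have hcU : (Fintype.card U : ℝ) = 0 := by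
      rw [Fintype.card_eq_zero]; norm_num
    rw [hcU, hE0]
    simp
  · -- main case
    have hUne : Nonempty U := not_isEmpty_iff.mp hU
    have hcU1 : 1 ≤ Fintype.card U := Fintype.card_pos
    obtain ⟨m, H, hH⟩ := hex
    set SC : Set H.Subgraph := {K : H.Subgraph | Nonempty (K.coe ≃g F)} with hSCdef
    have hSCfin : SC.Finite := Set.toFinite _
    set sF : Finset H.Subgraph := hSCfin.toFinset with hsF
    have hsFcard : sF.card = k := by
      rw [← hH, _root_.copyCount, Set.ncard_eq_toFinset_card _ hSCfin]
    set TF : Finset (Fin m) := sF.biUnion (fun K => K.verts.toFinite.toFinset) with hTF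
    have hTcopy : ∀ K ∈ SC, K.verts ⊆ (↑TF : Set (Fin m)) := by
      intro K hK x hx
      rw [Finset.mem_coe, hTF, Finset.mem_biUnion]
      exact ⟨K, hSCfin.mem_toFinset.mpr hK, (K.verts.toFinite.mem_toFinset).mpr hx⟩
    set t : ℕ := TF.card with ht
    have htk : t ≤ k * Fintype.card U := by
      calc t ≤ ∑ K ∈ sF, (K.verts.toFinite.toFinset).card := Finset.card_biUnion_le
      _ = ∑ K ∈ sF, Fintype.card U := by
          refine Finset.sum_congr rfl (fun K hK => ?_)
          obtain ⟨ψ⟩ : Nonempty (K.coe ≃g F) := hSCfin.mem_toFinset.mp hK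
          rw [← Set.ncard_eq_toFinset_card _ K.verts.toFinite, verts_ncard_of_copy ψ]
      _ = k * Fintype.card U := by rw [Finset.sum_const, smul_eq_mul, hsFcard]
    have htn : t ≤ n := by
      refine le_trans htk (le_trans ?_ hn)
      calc k * Fintype.card U ≤ 2 * (k * Fintype.card U) := Nat.le_mul_of_pos_left _ (by norm_num)
      _ = 2 * k * Fintype.card U := by ring
    -- the small graph containing exactly k copies of F
    set M : SimpleGraph ↥(↑TF : Set (Fin m)) := H.induce (↑TF : Set (Fin m)) with hM
    have hMk : _root_.copyCount M F = k := by
      rw [← hH, ← copyCount_eq_of_embedding (SimpleGraph.Embedding.induce (G := H)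
        (↑TF : Set (Fin m))) F]
      intro K hK
      have hr : Set.range ⇑(SimpleGraph.Embedding.induce (G := H) (↑TF : Set (Fin m)))
          = (↑TF : Set (Fin m)) := Subtype.range_coe
      rw [hr]
      exact hTcopy K hK
    -- choose the t vertices of smallest degree in G0
    obtain ⟨S, hScard, hSdeg⟩ := exists_min_degree_set G0 t htn
    set G₂ : SimpleGraph ↥(↑(Sᶜ) : Set (Fin n)) := G0.induce (↑(Sᶜ) : Set (Fin n)) with hG₂
    have hfree₂ : ∀ c : F.ConnectedComponent, _root_.copyCount G₂ (F.induce c.supp) = 0 :=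
      fun c => copyCount_zero_of_embedding
        (SimpleGraph.Embedding.induce (G := G0) (↑(Sᶜ) : Set (Fin n))) (hfree0 c)
    -- assemble the final graph
    have hcardsum : Nat.card (↥(↑TF : Set (Fin m)) ⊕ ↥(↑(Sᶜ) : Set (Fin n))) = n := by
      rw [Nat.card_sum, Nat.card_coe_set_eq, Nat.card_coe_set_eq,
        Set.ncard_coe_finset, Set.ncard_coe_finset, Finset.card_compl, Fintype.card_fin,
        hScard, ← ht]
      omega
    set e := Finite.equivFinOfCardEq hcardsum with he
    set Gsum := M ⊕g G₂ with hGsum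
    refine ⟨Gsum.map e.toEmbedding, ?_, ?_⟩
    · rw [← copyCount_eq_of_iso (G' := Gsum.map e.toEmbedding) (SimpleGraph.Iso.map e Gsum)]
      rw [copyCount_sum_left hfree₂]
      exact hMk
    · have hEiso : edgeCount Gsum = edgeCount (Gsum.map e.toEmbedding) :=
        edgeCount_eq_of_iso (SimpleGraph.Iso.map e Gsum)
      have h2 : edgeCount G₂ ≤ edgeCount Gsum :=
        edgeCount_le_of_embedding (SimpleGraph.Embedding.sumInr)
      have h1 := edge_loss G0 S
      have hec : edgeCount G0 = G0.edgeFinset.card := by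
        rw [edgeCount, Set.ncard_eq_toFinset_card']; simp [edgeFinset]
      have hsum := G0.sum_degrees_eq_twice_card_edges
      have h3 : n * ∑ v ∈ S, G0.degree v ≤ t * (2 * edgeCount G0) := by
        rw [hec]; rw [hsum] at hSdeg; exact hSdeg
      have h4 : t * (2 * edgeCount G0) ≤ (k * Fintype.card U) * (2 * edgeCount G0) :=
        Nat.mul_le_mul_right _ htk
      have hkcU : 0 < k * Fintype.card U := Nat.mul_pos hk hcU1
      have h2k : 2 * (k * Fintype.card U) ≤ n := by rw [← mul_assoc]; exact hn
      have hnpos : 0 < n := by omega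
      have hn0 : (0:ℝ) < n := by exact_mod_cast hnpos
      rw [← hE0]
      have hDle : ((∑ v ∈ S, G0.degree v : ℕ) : ℝ)
          ≤ 2 * k * Fintype.card U * (edgeCount G0) / n := by
        rw [le_div_iff₀ hn0]
        have hnat : (n * ∑ v ∈ S, G0.degree v : ℕ) ≤ 2 * k * Fintype.card U * edgeCount G0 := by
          calc (n * ∑ v ∈ S, G0.degree v : ℕ) ≤ t * (2 * edgeCount G0) := h3
          _ ≤ (k * Fintype.card U) * (2 * edgeCount G0) := h4
          _ = 2 * k * Fintype.card U * edgeCount G0 := by ring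
        have hc := (Nat.cast_le (α := ℝ)).mpr hnat
        push_cast at hc ⊢
        linarith
      have he0E : ((edgeCount G0 : ℕ) : ℝ)
          ≤ (edgeCount (Gsum.map e.toEmbedding) : ℝ) + ((∑ v ∈ S, G0.degree v : ℕ) : ℝ) := by
        have hnat2 : edgeCount G0 ≤ edgeCount (Gsum.map e.toEmbedding) + ∑ v ∈ S, G0.degree v := by
          calc edgeCount G0 ≤ edgeCount G₂ + ∑ v ∈ S, G0.degree v := h1
          _ ≤ edgeCount (Gsum.map e.toEmbedding) + ∑ v ∈ S, G0.degree v :=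
              Nat.add_le_add_right (le_trans h2 (le_of_eq hEiso)) _
        exact_mod_cast hnat2
      have hexp : (1 - 2 * (k:ℝ) * (Fintype.card U) / (n : ℝ)) * (edgeCount G0 : ℝ)
          = (edgeCount G0 : ℝ) - 2 * k * Fintype.card U * (edgeCount G0) / n := by ring
      rw [hexp]
      linarith [hDle, he0E]
end

section
/- For all integers r ≥ 2 and n ≥ r, exa_1(n,K_r) = C(r,2) + (r−2)(n−r) + ex(n−r,K_r), where C(r,2) = r(r−1)/2 and ex(n−r,K_r) is the Turán number, i.e., the number of edges of the Turán graph T(n−r, r−1) (the complete (r−1)-partite graph on n−r vertices with parts as equal as possible). -/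
open SimpleGraph

/-- The Turán number `ex(n, F)`: the maximum number of edges of a graph on `n`
vertices containing no copy of `F`. -/
noncomputable def exNum (n : ℕ) {W : Type*} (F : SimpleGraph W) : ℕ :=
  sSup {m | ∃ G : SimpleGraph (Fin n), _root_.copyCount G F = 0 ∧ edgeCount G = m}

/-- `exa_k(n, F)`: the maximum number of edges of a graph on `n` vertices containing
exactly `k` copies of `F`. -/
noncomputable def exaNum (k n : ℕ) {W : Type*} (F : SimpleGraph W) : ℕ :=
  sSup {m | ∃ G : SimpleGraph (Fin n), _root_.copyCount G F = k ∧ edgeCount G = m}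

open Finset

section Aux

variable {V : Type*} [Fintype V] [DecidableEq V]

lemma mem_copy_iff {r : ℕ} (G : SimpleGraph V) [DecidableRel G.Adj] (H : G.Subgraph) :
    Nonempty (H.coe ≃g (⊤ : SimpleGraph (Fin r))) ↔
      ∃ s ∈ G.cliqueFinset r, H = (⊤ : G.Subgraph).induce ↑s := by
  classical
  constructor
  · rintro ⟨e⟩
    have hadj : ∀ x y : H.verts, H.Adj x y ↔ (x : V) ≠ y := by
      intro x y
      have h1 : H.coe.Adj x y ↔ x ≠ y := by
        rw [← e.map_adj_iff]; simp [Subtype.ext_iff]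
      rw [show (H.Adj (x:V) (y:V)) ↔ H.coe.Adj x y from Iff.rfl, h1,
        ne_eq, ne_eq, Subtype.ext_iff]
    have hverts : H.verts.toFinset.card = r := by
      have : Fintype.card H.verts = r := by
        simpa using Fintype.card_congr e.toEquiv
      rw [Set.toFinset_card]; exact this
    refine ⟨H.verts.toFinset, ?_, ?_⟩
    · rw [mem_cliqueFinset_iff]
      constructor
      · intro x hx y hy hxy
        simp only [Finset.mem_coe, Set.mem_toFinset] at hx hy
        have := (hadj ⟨x, hx⟩ ⟨y, hy⟩).2 (by simpa using hxy)
        exact H.adj_sub this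
      · exact hverts
    · ext x y
      · simp
      · simp only [SimpleGraph.Subgraph.induce_adj, Subgraph.top_adj,
          Finset.mem_coe, Set.mem_toFinset]
        constructor
        · intro h
          have hx := H.edge_vert h
          have hy := H.edge_vert h.symm
          exact ⟨hx, hy, H.adj_sub h⟩
        · rintro ⟨hx, hy, hGxy⟩
          exact (hadj ⟨x, hx⟩ ⟨y, hy⟩).2 (by simpa using hGxy.ne)
  · rintro ⟨s, hs, rfl⟩
    rw [mem_cliqueFinset_iff] at hs
    have hcard : Fintype.card ((⊤ : G.Subgraph).induce ↑s).verts = r := by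
      simpa using hs.card_eq
    refine ⟨?_⟩
    have e : ((⊤ : G.Subgraph).induce ↑s).verts ≃ Fin r :=
      Fintype.equivFinOfCardEq hcard
    refine ⟨e, ?_⟩
    intro a b
    simp only [top_adj, ne_eq, EmbeddingLike.apply_eq_iff_eq]
    change ¬ a = b ↔ ((⊤ : G.Subgraph).induce ↑s).Adj a b
    simp only [Subgraph.induce_adj, Subgraph.top_adj]
    constructor
    · intro hab
      have ha := a.2; have hb := b.2
      exact ⟨ha, hb, hs.1 ha hb (by simpa [Subtype.ext_iff] using hab)⟩
    · rintro ⟨_, _, h⟩ hEq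
      exact h.ne (by rw [hEq])

lemma copyCount_top {r : ℕ} (G : SimpleGraph V) [DecidableRel G.Adj] :
    _root_.copyCount G (⊤ : SimpleGraph (Fin r)) = #(G.cliqueFinset r) := by
  classical
  have hset : {H : G.Subgraph | Nonempty (H.coe ≃g (⊤ : SimpleGraph (Fin r)))} =
      (fun s : Finset V => (⊤ : G.Subgraph).induce ↑s) '' ↑(G.cliqueFinset r) := by
    ext H
    rw [Set.mem_setOf_eq, mem_copy_iff]
    constructor
    · rintro ⟨s, hs, rfl⟩; exact ⟨s, hs, rfl⟩
    · rintro ⟨s, hs, rfl⟩; exact ⟨s, hs, rfl⟩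
  rw [_root_.copyCount, hset, Set.ncard_image_of_injOn, Set.ncard_coe_finset]
  intro s _ t _ h
  have := congrArg SimpleGraph.Subgraph.verts h
  simpa [Finset.coe_inj] using this

lemma edgeCount_eq {V : Type*} (G : SimpleGraph V) [Fintype G.edgeSet] :
    edgeCount G = #G.edgeFinset := Set.ncard_eq_toFinset_card' _

lemma copyCount_eq_zero_iff_s8 {r : ℕ} (G : SimpleGraph V) [DecidableRel G.Adj] :
    _root_.copyCount G (⊤ : SimpleGraph (Fin r)) = 0 ↔ G.CliqueFree r := by
  rw [copyCount_top, Finset.card_eq_zero, cliqueFinset_eq_empty_iff]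

lemma exNum_eq_turan (m r : ℕ) (hr : 2 ≤ r) :
    exNum m (⊤ : SimpleGraph (Fin r)) = edgeCount (turanGraph m (r - 1)) ∧
    ∀ k ∈ {k | ∃ G : SimpleGraph (Fin m), _root_.copyCount G (⊤ : SimpleGraph (Fin r)) = 0 ∧
      edgeCount G = k}, k ≤ edgeCount (turanGraph m (r - 1)) := by
  classical
  have hr1 : 0 < r - 1 := by omega
  have hrr : r - 1 + 1 = r := by omega
  have htm := isTuranMaximal_turanGraph (n := m) hr1
  have hub : ∀ k ∈ {k | ∃ G : SimpleGraph (Fin m),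
      _root_.copyCount G (⊤ : SimpleGraph (Fin r)) = 0 ∧ edgeCount G = k},
      k ≤ edgeCount (turanGraph m (r - 1)) := by
    rintro k ⟨G, hG0, rfl⟩
    rw [copyCount_eq_zero_iff_s8] at hG0
    rw [edgeCount_eq, edgeCount_eq]
    exact htm.2 (G' := G) (by rwa [hrr])
  have hmem : edgeCount (turanGraph m (r - 1)) ∈ {k | ∃ G : SimpleGraph (Fin m),
      _root_.copyCount G (⊤ : SimpleGraph (Fin r)) = 0 ∧ edgeCount G = k} := by
    refine ⟨turanGraph m (r - 1), ?_, rfl⟩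
    rw [copyCount_eq_zero_iff_s8]
    have := turanGraph_cliqueFree (n := m) hr1
    rwa [hrr] at this
  refine ⟨le_antisymm (csSup_le ⟨_, hmem⟩ hub) (le_csSup ⟨_, hub⟩ hmem), hub⟩

lemma two_mul_choose_two (r : ℕ) : 2 * r.choose 2 = r * (r - 1) := by
  induction r with
  | zero => simp
  | succ k ih =>
    rw [Nat.choose_succ_succ, Nat.choose_one_right, Nat.mul_add, ih]
    cases k with
    | zero => simp
    | succ j =>
      simp only [Nat.succ_sub_one]
      ring

-- degree into the unique clique is at most r - 2
lemma deg_into_clique {n r : ℕ} (hr : 2 ≤ r) (G : SimpleGraph (Fin n)) [DecidableRel G.Adj]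
    {s : Finset (Fin n)} (hs : G.IsNClique r s)
    (huniq : ∀ t, G.IsNClique r t → t = s) {v : Fin n} (hv : v ∉ s) :
    #(s.filter (G.Adj v ·)) ≤ r - 2 := by
  by_contra hc
  push_neg at hc
  have hr1 : r - 1 ≤ #(s.filter (G.Adj v ·)) := by omega
  obtain ⟨t, hts, htc⟩ := Finset.exists_subset_card_eq hr1
  have htsub : t ⊆ s := hts.trans (Finset.filter_subset _ _)
  have hvt : v ∉ t := fun h => hv (htsub h)
  have hclique : G.IsNClique r (insert v t) := by
    constructor
    · rw [Finset.coe_insert]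
      refine ((hs.1.subset (by exact_mod_cast htsub)).insert ?_)
      intro b hb _
      exact (Finset.mem_filter.1 (hts hb)).2
    · rw [Finset.card_insert_of_notMem hvt, htc]
      omega
  have := huniq _ hclique
  exact hv (this ▸ Finset.mem_insert_self v t)


lemma upper_bound {n r : ℕ} (hr : 2 ≤ r) (hn : r ≤ n)
    (G : SimpleGraph (Fin n)) [DecidableRel G.Adj]
    (h1 : #(G.cliqueFinset r) = 1) :
    edgeCount G ≤ r.choose 2 + (r - 2) * (n - r) + exNum (n - r) (⊤ : SimpleGraph (Fin r)) := by
  classical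
  obtain ⟨s, hs⟩ := Finset.card_eq_one.1 h1
  have hs' : G.IsNClique r s := mem_cliqueFinset_iff.1 (hs ▸ Finset.mem_singleton_self s)
  have huniq : ∀ t, G.IsNClique r t → t = s := by
    intro t ht
    have : t ∈ G.cliqueFinset r := mem_cliqueFinset_iff.2 ht
    rw [hs, Finset.mem_singleton] at this
    exact this
  have hscard : #s = r := hs'.2
  have hcompl : #sᶜ = n - r := by
    rw [Finset.card_compl, hscard]; simp
  set P : Finset (Fin n × Fin n) := univ.filter fun p : Fin n × Fin n => G.Adj p.1 p.2 with hPdef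
  have hP : #P = 2 * #G.edgeFinset := by rw [two_mul_card_edgeFinset]
  set A := P.filter (fun p => p.1 ∈ s) with hA
  set B := P.filter (fun p => p.1 ∉ s) with hB
  set P11 := A.filter (fun p => p.2 ∈ s) with h11
  set P12 := A.filter (fun p => p.2 ∉ s) with h12
  set P21 := B.filter (fun p => p.2 ∈ s) with h21
  set P22 := B.filter (fun p => p.2 ∉ s) with h22
  have hsplit : #P = #P11 + #P12 + #P21 + #P22 := by
    have u1 : #A + #B = #P := card_filter_add_card_filter_not _
    have u2 : #P11 + #P12 = #A := card_filter_add_card_filter_not _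
    have u3 : #P21 + #P22 = #B := card_filter_add_card_filter_not _
    omega
  -- P11
  have hP11 : #P11 ≤ r * (r - 1) := by
    have hsub : P11 ⊆ s.offDiag := by
      intro p hp
      simp only [h11, hA, hPdef, Finset.mem_filter, Finset.mem_univ, true_and] at hp
      exact Finset.mem_offDiag.2 ⟨hp.1.2, hp.2, hp.1.1.ne⟩
    calc #P11 ≤ #s.offDiag := Finset.card_le_card hsub
      _ = r * r - r := by rw [Finset.offDiag_card, hscard]
      _ = r * (r - 1) := by cases r with | zero => simp | succ k => simp [Nat.succ_sub_one, Nat.mul_succ]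
  -- P12
  have hdeg : ∀ v ∉ s, #(s.filter (G.Adj v ·)) ≤ r - 2 :=
    fun v hv => deg_into_clique hr G hs' huniq hv
  have hP12 : #P12 ≤ (r - 2) * (n - r) := by
    have := Finset.card_eq_sum_card_fiberwise (f := Prod.snd) (s := P12) (t := sᶜ) ?_
    · rw [this]
      have hb : ∀ v ∈ sᶜ, #(P12.filter fun p => p.2 = v) ≤ r - 2 := by
        intro v hv
        have hv' : v ∉ s := Finset.mem_compl.1 hv
        refine le_trans (Finset.card_le_card_of_injOn Prod.fst ?_ ?_) (hdeg v hv')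
        · intro p hp
          simp only [Finset.mem_coe, h12, hA, hPdef, Finset.mem_filter, Finset.mem_univ, true_and] at hp
          obtain ⟨⟨⟨hadj, h1s⟩, _⟩, h2v⟩ := hp
          subst h2v
          exact Finset.mem_filter.2 ⟨h1s, hadj.symm⟩
        · intro p hp q hq hpq
          simp only [Finset.coe_filter, Set.mem_setOf_eq] at hp hq
          exact Prod.ext hpq (hp.2.trans hq.2.symm)
      calc ∑ v ∈ sᶜ, #(P12.filter fun p => p.2 = v) ≤ ∑ _v ∈ sᶜ, (r - 2) :=
            Finset.sum_le_sum hb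
        _ = (r - 2) * (n - r) := by rw [Finset.sum_const, hcompl, smul_eq_mul, Nat.mul_comm]
    · intro p hp
      simp only [Finset.mem_coe, h12, hA, hPdef, Finset.mem_filter, Finset.mem_univ, true_and] at hp
      exact Finset.mem_compl.2 hp.2
  -- P21
  have hP21 : #P21 ≤ (r - 2) * (n - r) := by
    have := Finset.card_eq_sum_card_fiberwise (f := Prod.fst) (s := P21) (t := sᶜ) ?_
    · rw [this]
      have hb : ∀ v ∈ sᶜ, #(P21.filter fun p => p.1 = v) ≤ r - 2 := by
        intro v hv
        have hv' : v ∉ s := Finset.mem_compl.1 hv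
        refine le_trans (Finset.card_le_card_of_injOn Prod.snd ?_ ?_) (hdeg v hv')
        · intro p hp
          simp only [Finset.mem_coe, h21, hB, hPdef, Finset.mem_filter, Finset.mem_univ, true_and] at hp
          obtain ⟨⟨⟨hadj, _⟩, h2s⟩, h1v⟩ := hp
          subst h1v
          exact Finset.mem_filter.2 ⟨h2s, hadj⟩
        · intro p hp q hq hpq
          simp only [Finset.coe_filter, Set.mem_setOf_eq] at hp hq
          exact Prod.ext (hp.2.trans hq.2.symm) hpq
      calc ∑ v ∈ sᶜ, #(P21.filter fun p => p.1 = v) ≤ ∑ _v ∈ sᶜ, (r - 2) :=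
            Finset.sum_le_sum hb
        _ = (r - 2) * (n - r) := by rw [Finset.sum_const, hcompl, smul_eq_mul, Nat.mul_comm]
    · intro p hp
      simp only [Finset.mem_coe, h21, hB, hPdef, Finset.mem_filter, Finset.mem_univ, true_and] at hp
      exact Finset.mem_compl.2 hp.1.2
  -- P22
  let e : Fin (n - r) ≃ {x // x ∈ sᶜ} := (sᶜ.equivFin.trans (finCongr hcompl)).symm
  let G' : SimpleGraph (Fin (n - r)) := G.comap (fun i => ((e i : Fin n)))
  haveI : DecidableRel G'.Adj := Classical.decRel _
  have hinj : Function.Injective (fun i : Fin (n - r) => ((e i : Fin n))) := by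
    intro a b h
    exact e.injective (Subtype.ext h)
  have hfree : G'.CliqueFree r := by
    intro t ht
    have hu : G.IsNClique r (t.image fun i => ((e i : Fin n))) := by
      constructor
      · rintro x hx y hy hxy
        simp only [Finset.coe_image, Set.mem_image, Finset.mem_coe] at hx hy
        obtain ⟨a, ha, rfl⟩ := hx
        obtain ⟨b, hb, rfl⟩ := hy
        have hab : a ≠ b := fun h => hxy (by rw [h])
        exact ht.1 ha hb hab
      · rw [Finset.card_image_of_injective _ hinj, ht.2]
    have := huniq _ hu
    obtain ⟨a, hat⟩ := Finset.card_pos.1 (by rw [ht.2]; omega : 0 < #t)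
    have hmem := Finset.mem_image_of_mem (fun i => ((e i : Fin n))) hat
    rw [this] at hmem
    exact Finset.mem_compl.1 (e a).2 hmem
  have hEx : edgeCount G' ≤ exNum (n - r) (⊤ : SimpleGraph (Fin r)) := by
    obtain ⟨heq, hub⟩ := exNum_eq_turan (n - r) r hr
    rw [heq]
    exact hub _ ⟨G', (copyCount_eq_zero_iff_s8 G').2 hfree, rfl⟩
  have hP22 : #P22 = 2 * #G'.edgeFinset := by
    rw [two_mul_card_edgeFinset]
    refine Finset.card_bij' (fun b hb => ?_)
      (fun a _ => ((e a.1 : Fin n), (e a.2 : Fin n))) ?_ ?_ ?_ ?_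
    · -- map P22 → P'
      refine (e.symm ⟨b.1, ?_⟩, e.symm ⟨b.2, ?_⟩)
      · simp only [h22, hB, hPdef, Finset.mem_filter] at hb
        exact Finset.mem_compl.2 hb.1.2
      · simp only [h22, hB, hPdef, Finset.mem_filter] at hb
        exact Finset.mem_compl.2 hb.2
    · -- lands in P'
      intro b hb
      simp only [Finset.mem_filter, Finset.mem_univ, true_and]
      simp only [h22, hB, hPdef, Finset.mem_filter, Finset.mem_univ, true_and] at hb
      show G.Adj _ _
      simp only [Equiv.apply_symm_apply]
      exact hb.1.1
    · -- lands in P22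
      intro a ha
      simp only [Finset.mem_filter, Finset.mem_univ, true_and] at ha
      simp only [h22, hB, hPdef, Finset.mem_filter, Finset.mem_univ, true_and]
      exact ⟨⟨ha, Finset.mem_compl.1 (e a.1).2⟩, Finset.mem_compl.1 (e a.2).2⟩
    · intro b hb
      apply Prod.ext <;> simp
    · intro a ha
      apply Prod.ext <;> simp [Prod.ext_iff]
  have hfinal : 2 * #G.edgeFinset ≤ 2 * (r.choose 2 + (r - 2) * (n - r) +
      exNum (n - r) (⊤ : SimpleGraph (Fin r))) := by
    have hch : 2 * r.choose 2 = r * (r - 1) := two_mul_choose_two r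
    have hG'le : #G'.edgeFinset ≤ exNum (n - r) (⊤ : SimpleGraph (Fin r)) := by
      rw [← edgeCount_eq]; exact hEx
    omega
  rw [edgeCount_eq]
  omega


def cRel (r : ℕ) (a b : ℕ) : Prop :=
  (a < r ∧ b < r ∧ a ≠ b) ∨
  (a < r ∧ r ≤ b ∧ a ≠ r - 1 ∧ a ≠ (b - r) % (r - 1)) ∨
  (b < r ∧ r ≤ a ∧ b ≠ r - 1 ∧ b ≠ (a - r) % (r - 1)) ∨
  (r ≤ a ∧ r ≤ b ∧ (a - r) % (r - 1) ≠ (b - r) % (r - 1))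

instance (r a b : ℕ) : Decidable (cRel r a b) := by unfold cRel; infer_instance

def consG (n r : ℕ) : SimpleGraph (Fin n) where
  Adj i j := cRel r i j
  symm := by
    constructor
    intro i j h
    beta_reduce at h ⊢
    unfold cRel at h ⊢
    tauto
  loopless := by
    constructor
    intro i h
    rcases h with ⟨_, _, h⟩ | ⟨h1, h2, _⟩ | ⟨h1, h2, _⟩ | ⟨_, _, h⟩
    · exact h rfl
    · omega
    · omega
    · exact h rfl

instance (n r : ℕ) : DecidableRel (consG n r).Adj :=
  fun a b => inferInstanceAs (Decidable (cRel r a b))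

lemma consG_adj {n r : ℕ} (i j : Fin n) : (consG n r).Adj i j ↔ cRel r i j := Iff.rfl

lemma coreR_card {n r : ℕ} (hn : r ≤ n) :
    #(univ.filter fun i : Fin n => (i : ℕ) < r) = r := by
  have : (univ.filter fun i : Fin n => (i : ℕ) < r) =
      (Finset.range r).attachFin (fun m hm => lt_of_lt_of_le (Finset.mem_range.1 hm) hn) := by
    ext i
    simp [Finset.mem_attachFin]
  rw [this, Finset.card_attachFin, Finset.card_range]

lemma consG_cliqueFinset {n r : ℕ} (hr : 2 ≤ r) (hn : r ≤ n) :
    (consG n r).cliqueFinset r = {univ.filter fun i : Fin n => (i : ℕ) < r} := by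
  set R := univ.filter fun i : Fin n => (i : ℕ) < r with hR
  have hRcard : #R = r := coreR_card hn
  ext t
  rw [mem_cliqueFinset_iff, Finset.mem_singleton]
  constructor
  · intro ht
    by_cases hout : ∀ x ∈ t, (x : ℕ) < r
    · refine Finset.eq_of_subset_of_card_le ?_ (le_of_eq (hRcard.trans ht.2.symm))
      intro x hx
      exact Finset.mem_filter.2 ⟨Finset.mem_univ x, hout x hx⟩
    · push_neg at hout
      obtain ⟨v, hvt, hvr⟩ := hout
      exfalso
      set f : Fin n → ℕ := fun x => if (x : ℕ) < r then (x : ℕ) else ((x : ℕ) - r) % (r - 1)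
        with hf
      have hr1 : 0 < r - 1 := by omega
      have hmaps : ∀ x ∈ t, f x ∈ Finset.range (r - 1) := by
        intro x hx
        rw [Finset.mem_range]
        by_cases hxc : (x : ℕ) < r
        · have hxv : x ≠ v := by
            intro h; rw [h] at hxc; omega
          have hadj := ht.1 hx hvt hxv
          rw [consG_adj] at hadj
          rcases hadj with ⟨_, h2, _⟩ | ⟨_, _, h3, _⟩ | ⟨h1, _, _⟩ | ⟨h1, _, _⟩
          · omega
          · simp only [hf, if_pos hxc]; omega
          · omega
          · omega
        · simp only [hf, if_neg hxc]
          exact Nat.mod_lt _ hr1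
      have hinj : Set.InjOn f ↑t := by
        intro x hx y hy hfxy
        by_contra hxy
        have hadj := ht.1 hx hy hxy
        rw [consG_adj] at hadj
        rcases hadj with ⟨h1, h2, h3⟩ | ⟨h1, h2, h3, h4⟩ | ⟨h1, h2, h3, h4⟩ | ⟨h1, h2, h3⟩
        · rw [hf] at hfxy
          simp only [if_pos h1, if_pos h2] at hfxy
          exact h3 hfxy
        · rw [hf] at hfxy
          simp only [if_pos h1, if_neg (by omega : ¬ ((y : ℕ) < r))] at hfxy
          exact h4 hfxy
        · rw [hf] at hfxy
          simp only [if_pos h1, if_neg (by omega : ¬ ((x : ℕ) < r))] at hfxy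
          exact h4 hfxy.symm
        · rw [hf] at hfxy
          simp only [if_neg (by omega : ¬ ((x : ℕ) < r)),
            if_neg (by omega : ¬ ((y : ℕ) < r))] at hfxy
          exact h3 hfxy
      have hle := Finset.card_le_card_of_injOn f hmaps hinj
      rw [Finset.card_range, ht.2] at hle
      omega
  · rintro rfl
    constructor
    · intro x hx y hy hxy
      rw [hR, Finset.mem_coe, Finset.mem_filter] at hx hy
      rw [consG_adj]
      exact Or.inl ⟨hx.2, hy.2, fun h => hxy (Fin.ext h)⟩
    · exact hRcard


lemma mul_self_sub_self (r : ℕ) : r * r - r = r * (r - 1) := by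
  cases r with
  | zero => rfl
  | succ k => simp [Nat.mul_succ, Nat.succ_sub_one]

lemma consG_edgeCount {n r : ℕ} (hr : 2 ≤ r) (hn : r ≤ n) :
    edgeCount (consG n r) = r.choose 2 + (r - 2) * (n - r) +
      edgeCount (turanGraph (n - r) (r - 1)) := by
  set G := consG n r with hG
  set R := univ.filter (fun i : Fin n => (i : ℕ) < r) with hR
  have hRcard : #R = r := coreR_card hn
  have hRcompl : #Rᶜ = n - r := by
    rw [Finset.card_compl, hRcard, Fintype.card_fin]
  have hmemR : ∀ x : Fin n, x ∈ R ↔ (x : ℕ) < r := by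
    intro x; simp [hR]
  have hmemRc : ∀ x : Fin n, x ∉ R ↔ r ≤ (x : ℕ) := by
    intro x; rw [hmemR]; omega
  set Q : Finset (Fin n × Fin n) := univ.filter fun p : Fin n × Fin n => G.Adj p.1 p.2
    with hQdef
  have hQ : #Q = 2 * #G.edgeFinset := by rw [two_mul_card_edgeFinset]
  set A := Q.filter (fun p => p.1 ∈ R) with hA
  set B := Q.filter (fun p => p.1 ∉ R) with hB
  set Q11 := A.filter (fun p => p.2 ∈ R) with h11
  set Q12 := A.filter (fun p => p.2 ∉ R) with h12
  set Q21 := B.filter (fun p => p.2 ∈ R) with h21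
  set Q22 := B.filter (fun p => p.2 ∉ R) with h22
  have hsplit : #Q = #Q11 + #Q12 + #Q21 + #Q22 := by
    have u1 : #A + #B = #Q := card_filter_add_card_filter_not _
    have u2 : #Q11 + #Q12 = #A := card_filter_add_card_filter_not _
    have u3 : #Q21 + #Q22 = #B := card_filter_add_card_filter_not _
    omega
  -- Q11
  have hQ11 : #Q11 = r * r - r := by
    have heq : Q11 = R.offDiag := by
      ext p
      simp only [h11, hA, hQdef, Finset.mem_filter, Finset.mem_univ, true_and,
        Finset.mem_offDiag]
      constructor
      · rintro ⟨⟨hadj, h1⟩, h2⟩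
        exact ⟨h1, h2, hadj.ne⟩
      · rintro ⟨h1, h2, hne⟩
        refine ⟨⟨?_, h1⟩, h2⟩
        rw [hG, consG_adj]
        exact Or.inl ⟨(hmemR _).1 h1, (hmemR _).1 h2, fun h => hne (Fin.ext h)⟩
    rw [heq, Finset.offDiag_card, hRcard]
  -- Q12 fibers
  have hr1 : 0 < r - 1 := by omega
  have hfib : ∀ v : Fin n, v ∉ R →
      ∀ (a : Fin n), (G.Adj a v ∧ a ∈ R) ↔
        (a ∈ (R.erase (⟨r - 1, by omega⟩ : Fin n)).erase
          (⟨((v : ℕ) - r) % (r - 1), by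
            have := Nat.mod_lt ((v : ℕ) - r) hr1; omega⟩ : Fin n)) := by
    intro v hv a
    have hvr : r ≤ (v : ℕ) := (hmemRc v).1 hv
    constructor
    · rintro ⟨hadj, haR⟩
      have haval : (a : ℕ) < r := (hmemR a).1 haR
      rw [hG, consG_adj] at hadj
      rcases hadj with ⟨_, h2, _⟩ | ⟨_, _, h3, h4⟩ | ⟨h1, h2, _⟩ | ⟨h1, _, _⟩
      · omega
      · refine Finset.mem_erase.2 ⟨?_, Finset.mem_erase.2 ⟨?_, haR⟩⟩
        · intro h; exact h4 (by rw [h])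
        · intro h; exact h3 (by rw [h])
      · omega
      · omega
    · intro ha
      obtain ⟨hne2, ha'⟩ := Finset.mem_erase.1 ha
      obtain ⟨hne1, haR⟩ := Finset.mem_erase.1 ha'
      have haval : (a : ℕ) < r := (hmemR a).1 haR
      refine ⟨?_, haR⟩
      rw [hG, consG_adj]
      refine Or.inr (Or.inl ⟨haval, hvr, ?_, ?_⟩)
      · intro h; exact hne1 (Fin.ext h)
      · intro h; exact hne2 (Fin.ext h)
  have herase : ∀ v : Fin n, v ∉ R →
      #((R.erase (⟨r - 1, by omega⟩ : Fin n)).erase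
        (⟨((v : ℕ) - r) % (r - 1), by
          have := Nat.mod_lt ((v : ℕ) - r) hr1; omega⟩ : Fin n)) = r - 2 := by
    intro v hv
    have hmod : ((v : ℕ) - r) % (r - 1) < r - 1 := Nat.mod_lt _ hr1
    have hw1 : (⟨r - 1, by omega⟩ : Fin n) ∈ R := (hmemR _).2 (by simp; omega)
    have hw2 : (⟨((v : ℕ) - r) % (r - 1), by
        have := Nat.mod_lt ((v : ℕ) - r) hr1; omega⟩ : Fin n) ∈
        R.erase (⟨r - 1, by omega⟩ : Fin n) := by
      refine Finset.mem_erase.2 ⟨?_, (hmemR _).2 (by simp; omega)⟩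
      intro h
      have := congrArg Fin.val h
      simp at this
      omega
    rw [Finset.card_erase_of_mem hw2, Finset.card_erase_of_mem hw1, hRcard]
    omega
  -- Q12
  have hQ12 : #Q12 = (r - 2) * (n - r) := by
    rw [Finset.card_eq_sum_card_fiberwise (f := Prod.snd) (t := Rᶜ)
      (fun p hp => by
        simp only [Finset.mem_coe, h12, hA, hQdef, Finset.mem_filter, Finset.mem_univ, true_and] at hp
        exact Finset.mem_compl.2 hp.2)]
    have hb : ∀ v ∈ Rᶜ, #(Q12.filter fun p => p.2 = v) = r - 2 := by
      intro v hv
      have hv' : v ∉ R := Finset.mem_compl.1 hv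
      rw [← herase v hv']
      refine Finset.card_bij' (fun p _ => p.1) (fun a _ => (a, v)) ?_ ?_ ?_ ?_
      · intro p hp
        simp only [h12, hA, hQdef, Finset.mem_filter, Finset.mem_univ, true_and] at hp
        obtain ⟨⟨⟨hadj, h1R⟩, _⟩, h2v⟩ := hp
        exact (hfib v hv' p.1).1 ⟨h2v ▸ hadj, h1R⟩
      · intro a ha
        have := (hfib v hv' a).2 ha
        simp only [h12, hA, hQdef, Finset.mem_filter, Finset.mem_univ, true_and]
        exact ⟨⟨⟨this.1, this.2⟩, hv'⟩, trivial⟩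
      · intro p hp
        simp only [h12, hA, hQdef, Finset.mem_filter, Finset.mem_univ, true_and] at hp
        exact Prod.ext rfl hp.2.symm
      · intro a _; rfl
    rw [Finset.sum_congr rfl hb, Finset.sum_const, hRcompl, smul_eq_mul, Nat.mul_comm]
  -- Q21
  have hQ21 : #Q21 = (r - 2) * (n - r) := by
    rw [Finset.card_eq_sum_card_fiberwise (f := Prod.fst) (t := Rᶜ)
      (fun p hp => by
        simp only [Finset.mem_coe, h21, hB, hQdef, Finset.mem_filter, Finset.mem_univ, true_and] at hp
        exact Finset.mem_compl.2 hp.1.2)]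
    have hb : ∀ v ∈ Rᶜ, #(Q21.filter fun p => p.1 = v) = r - 2 := by
      intro v hv
      have hv' : v ∉ R := Finset.mem_compl.1 hv
      rw [← herase v hv']
      refine Finset.card_bij' (fun p _ => p.2) (fun a _ => (v, a)) ?_ ?_ ?_ ?_
      · intro p hp
        simp only [h21, hB, hQdef, Finset.mem_filter, Finset.mem_univ, true_and] at hp
        obtain ⟨⟨⟨hadj, _⟩, h2R⟩, h1v⟩ := hp
        exact (hfib v hv' p.2).1 ⟨(h1v ▸ hadj).symm, h2R⟩
      · intro a ha
        have := (hfib v hv' a).2 ha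
        simp only [h21, hB, hQdef, Finset.mem_filter, Finset.mem_univ, true_and]
        exact ⟨⟨⟨this.1.symm, hv'⟩, this.2⟩, trivial⟩
      · intro p hp
        simp only [h21, hB, hQdef, Finset.mem_filter, Finset.mem_univ, true_and] at hp
        exact Prod.ext hp.2.symm rfl
      · intro a _; rfl
    rw [Finset.sum_congr rfl hb, Finset.sum_const, hRcompl, smul_eq_mul, Nat.mul_comm]
  -- Q22
  have hQ22 : #Q22 = 2 * #(turanGraph (n - r) (r - 1)).edgeFinset := by
    rw [two_mul_card_edgeFinset]
    refine Finset.card_bij' (fun p hp => ?_) (fun a _ =>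
      ((⟨(a.1 : ℕ) + r, by have := a.1.isLt; omega⟩ : Fin n),
       (⟨(a.2 : ℕ) + r, by have := a.2.isLt; omega⟩ : Fin n))) ?_ ?_ ?_ ?_
    · -- forward map
      refine ((⟨(p.1 : ℕ) - r, ?_⟩ : Fin (n - r)), (⟨(p.2 : ℕ) - r, ?_⟩ : Fin (n - r)))
      · simp only [h22, hB, hQdef, Finset.mem_filter, Finset.mem_univ, true_and] at hp
        have h1 := (hmemRc p.1).1 hp.1.2
        have := p.1.isLt
        omega
      · simp only [h22, hB, hQdef, Finset.mem_filter, Finset.mem_univ, true_and] at hp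
        have h2 := (hmemRc p.2).1 hp.2
        have := p.2.isLt
        omega
    · intro p hp
      simp only [Finset.mem_filter, Finset.mem_univ, true_and]
      simp only [h22, hB, hQdef, Finset.mem_filter, Finset.mem_univ, true_and] at hp
      obtain ⟨⟨hadj, h1⟩, h2⟩ := hp
      have hv1 : r ≤ (p.1 : ℕ) := (hmemRc p.1).1 h1
      have hv2 : r ≤ (p.2 : ℕ) := (hmemRc p.2).1 h2
      rw [hG, consG_adj] at hadj
      rcases hadj with ⟨h, _⟩ | ⟨h, _⟩ | ⟨h, _⟩ | ⟨_, _, h⟩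
      · omega
      · omega
      · omega
      · exact h
    · intro a ha
      simp only [Finset.mem_filter, Finset.mem_univ, true_and] at ha
      simp only [h22, hB, hQdef, Finset.mem_filter, Finset.mem_univ, true_and]
      refine ⟨⟨?_, ?_⟩, ?_⟩
      · show cRel r _ _
        refine Or.inr (Or.inr (Or.inr ⟨by simp, by simp, ?_⟩))
        simpa [Nat.add_sub_cancel, turanGraph_adj] using ha
      · rw [hmemRc]; simp
      · rw [hmemRc]; simp
    · intro p hp
      simp only [h22, hB, hQdef, Finset.mem_filter, Finset.mem_univ, true_and] at hp
      have hv1 : r ≤ (p.1 : ℕ) := (hmemRc p.1).1 hp.1.2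
      have hv2 : r ≤ (p.2 : ℕ) := (hmemRc p.2).1 hp.2
      apply Prod.ext <;> (apply Fin.ext; simp; omega)
    · intro a _
      apply Prod.ext <;> (apply Fin.ext; simp)
  have h2ch := two_mul_choose_two r
  have hms := mul_self_sub_self r
  rw [edgeCount_eq, edgeCount_eq]
  omega

end Aux

/-- for `r ≥ 2` and `n ≥ r`,
`exa_1(n, K_r) = C(r,2) + (r−2)(n−r) + ex(n−r, K_r)`, where the Turán number
`ex(n−r, K_r)` equals the number of edges of the Turán graph `T(n−r, r−1)`. -/
theorem stmt8 (r n : ℕ) (hr : 2 ≤ r) (hn : r ≤ n) :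
    exaNum 1 n (⊤ : SimpleGraph (Fin r)) =
      r.choose 2 + (r - 2) * (n - r) + exNum (n - r) (⊤ : SimpleGraph (Fin r)) ∧
    exNum (n - r) (⊤ : SimpleGraph (Fin r)) = edgeCount (turanGraph (n - r) (r - 1)) := by
  classical
  obtain ⟨hturan, _⟩ := exNum_eq_turan (n - r) r hr
  refine ⟨?_, hturan⟩
  set RHS := r.choose 2 + (r - 2) * (n - r) + exNum (n - r) (⊤ : SimpleGraph (Fin r))
    with hRHS
  have hub : ∀ k ∈ {m | ∃ G : SimpleGraph (Fin n),
      _root_.copyCount G (⊤ : SimpleGraph (Fin r)) = 1 ∧ edgeCount G = m}, k ≤ RHS := by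
    rintro k ⟨G, hG1, rfl⟩
    letI : DecidableRel G.Adj := Classical.decRel _
    rw [copyCount_top] at hG1
    exact upper_bound hr hn G hG1
  have hmem : RHS ∈ {m | ∃ G : SimpleGraph (Fin n),
      _root_.copyCount G (⊤ : SimpleGraph (Fin r)) = 1 ∧ edgeCount G = m} := by
    refine ⟨consG n r, ?_, ?_⟩
    · rw [copyCount_top, consG_cliqueFinset hr hn, Finset.card_singleton]
    · rw [consG_edgeCount hr hn, hRHS, hturan]
  exact le_antisymm (csSup_le ⟨_, hmem⟩ hub) (le_csSup ⟨_, hub⟩ hmem)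
end
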